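/- arXiv:1105.4698 — 3 statements merged into one kernel-verified Lean document; each statement's English description precedes it below -/
import Mathlib

section
/- Let S be a discrete valuation ring with uniformizer x, let n ≥ 2 be an integer, and set R = S/(x^n). For each integer i with 1 ≤ i ≤ n−1, the sequence of R-modules 0 → R/(x^i) → R/(x^{i−1}) ⊕ R/(x^{i+1}) → R/(x^i) → 0, in which the first map sends the class of a to (class of a, class of ax) and the second map sends (class of a, class of b) to the class of ax − b, is a short exact sequence which does not split. -/
/-!
Write `y` for the image of `x` in `R = S/(xⁿ)`. Exactness in the middle only needs
`i ≥ 1`: if `ay - b = yⁱc`, then `a - yⁱ⁻¹c` is a preimage of `(a, b)`. Injectivity and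
non-splitting rest on the cancellation `y^(j+k) ∣ yʲa → yᵏ ∣ a` for `j + k ≤ n`, inherited
from `x` being a non-zero-divisor of `S`. A section `s` would give `s 1 = (a, b)` with
`ay - b ≡ 1 mod yⁱ`; since `yⁱ • s 1 = s (yⁱ) = 0`, we get `y^(i+1) ∣ yⁱb`, hence `y ∣ b`,
hence `y ∣ 1`, which is absurd as `x` is not a unit.
-/

open Ideal.Quotient in
theorem pow_dvd_of_pow_add_dvd_pow_mul {S : Type*} [CommRing S] {x : S} (hx : IsLeftRegular x)
    {n j k : ℕ} (hjk : j + k ≤ n) {a : S ⧸ Ideal.span {x ^ n}}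
    (h : mk _ x ^ (j + k) ∣ mk _ x ^ j * a) : mk _ x ^ k ∣ a := by
  obtain ⟨s, rfl⟩ := mk_surjective a
  obtain ⟨c, hc⟩ := h
  obtain ⟨t, rfl⟩ := mk_surjective c
  simp only [← map_pow, ← map_mul] at hc
  obtain ⟨d, hd⟩ := Ideal.mem_span_singleton.mp ((mk_eq_mk_iff_sub_mem _ _).mp hc)
  have hcancel : s - x ^ k * t = x ^ (n - j) * d := hx.pow j <| by
    linear_combination hd - d * pow_mul_pow_sub x (by omega : j ≤ n)
  have hs : x ^ k ∣ s := by
    rw [sub_eq_iff_eq_add.mp hcancel]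
    exact dvd_add ((pow_dvd_pow x (by omega)).mul_right d) (dvd_mul_right _ t)
  simpa only [map_pow] using map_dvd (mk _) hs

open Ideal.Quotient in
theorem not_isUnit_mk_span_pow {S : Type*} [CommRing S] {x : S} (hx : ¬IsUnit x)
    {n : ℕ} (hn : n ≠ 0) :
    ¬IsUnit (mk (Ideal.span {x ^ n}) x) := fun h => by
  obtain ⟨b, hb⟩ := isUnit_iff_exists_inv.mp h
  obtain ⟨t, rfl⟩ := mk_surjective b
  rw [← map_mul, ← map_one (mk _), mk_eq_mk_iff_sub_mem, Ideal.mem_span_singleton] at hb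
  have hx1 : x ∣ x * t - (x * t - 1) := dvd_sub (dvd_mul_right x t) ((dvd_pow_self x hn).trans hb)
  exact hx (isUnit_of_dvd_one (by simpa using hx1))

namespace AuslanderReitenSequence

open Ideal.Quotient

variable {R : Type*} [CommRing R] {y : R} {i : ℕ}
  {f : R ⧸ Ideal.span {y ^ i} →ₗ[R]
    (R ⧸ Ideal.span {y ^ (i - 1)}) × (R ⧸ Ideal.span {y ^ (i + 1)})}
  {g : (R ⧸ Ideal.span {y ^ (i - 1)}) × (R ⧸ Ideal.span {y ^ (i + 1)}) →ₗ[R]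
    R ⧸ Ideal.span {y ^ i}}

theorem injective (hdiv : ∀ a : R, y ^ (i + 1) ∣ y * a → y ^ i ∣ a)
    (hf : ∀ a : R, f (mk _ a) = (mk _ a, mk _ (a * y))) :
    Function.Injective f := by
  refine (injective_iff_map_eq_zero f).mpr fun c hc => ?_
  obtain ⟨a, rfl⟩ := mk_surjective c
  rw [hf, Prod.mk_eq_zero, eq_zero_iff_dvd, eq_zero_iff_dvd, mul_comm] at hc
  exact (eq_zero_iff_dvd _ _).mpr (hdiv a hc.2)

theorem range_eq_ker (hi : 1 ≤ i) (hf : ∀ a : R, f (mk _ a) = (mk _ a, mk _ (a * y)))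
    (hg : ∀ a b : R, g (mk _ a, mk _ b) = mk _ (a * y - b)) :
    LinearMap.range f = LinearMap.ker g := by
  apply le_antisymm
  · rintro _ ⟨c, rfl⟩
    obtain ⟨a, rfl⟩ := mk_surjective c
    rw [LinearMap.mem_ker, hf, hg, sub_self, map_zero]
  · rintro ⟨α, β⟩ hαβ
    obtain ⟨a, rfl⟩ := mk_surjective α
    obtain ⟨b, rfl⟩ := mk_surjective β
    rw [LinearMap.mem_ker, hg, eq_zero_iff_dvd] at hαβ
    obtain ⟨c, hc⟩ := hαβ
    refine ⟨mk _ (a - y ^ (i - 1) * c), ?_⟩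
    rw [hf, Prod.mk.injEq, mk_eq_mk_iff_sub_mem, Ideal.mem_span_singleton]
    exact ⟨⟨-c, by ring⟩, congrArg (mk _) <| by
      linear_combination hc - c * pow_sub_one_mul (by omega : i ≠ 0) y⟩

theorem surjective (hg : ∀ a b : R, g (mk _ a, mk _ b) = mk _ (a * y - b)) :
    Function.Surjective g := by
  intro c
  obtain ⟨a, rfl⟩ := mk_surjective c
  exact ⟨(0, mk _ (-a)), by rw [← map_zero (mk _), hg, zero_mul, zero_sub, neg_neg]⟩

theorem not_exists_rightInverse (hi : 1 ≤ i) (hy : ¬IsUnit y)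
    (hdiv : ∀ b : R, y ^ (i + 1) ∣ y ^ i * b → y ∣ b)
    (hg : ∀ a b : R, g (mk _ a, mk _ b) = mk _ (a * y - b)) :
    ¬∃ s : R ⧸ Ideal.span {y ^ i} →ₗ[R] _, g.comp s = LinearMap.id := by
  rintro ⟨s, hs⟩
  obtain ⟨a, ha⟩ := mk_surjective (s 1).1
  obtain ⟨b, hb⟩ := mk_surjective (s 1).2
  have hs1 : s 1 = (mk _ a, mk _ b) := Prod.ext ha.symm hb.symm
  have hgs1 : mk (Ideal.span {y ^ i}) (a * y - b) = mk _ 1 := by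
    rw [← hg, ← hs1]
    exact LinearMap.congr_fun hs 1
  have htors : y ^ i • s 1 = 0 := by
    rw [← map_smul, Algebra.smul_def, mul_one, algebraMap_eq, mk_singleton_self, map_zero]
  have hyb : y ∣ b := by
    refine hdiv b ((eq_zero_iff_dvd _ _).mp ?_)
    rw [hs1, Prod.smul_mk, Prod.mk_eq_zero, Algebra.smul_def, algebraMap_eq, ← map_mul] at htors
    exact htors.2
  rw [mk_eq_mk_iff_sub_mem, Ideal.mem_span_singleton] at hgs1
  have hy1 : y ∣ a * y - b - (a * y - b - 1) :=
    dvd_sub (dvd_sub (dvd_mul_left y a) hyb) ((dvd_pow_self y (by omega)).trans hgs1)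
  exact hy (isUnit_of_dvd_one (by simpa using hy1))

end AuslanderReitenSequence

theorem auslander_reiten_sequence_of_artinian_hypersurface_general
    (S : Type) [CommRing S] [IsDomain S] [IsDiscreteValuationRing S]
    (x : S) (hx : IsLocalRing.maximalIdeal S = Ideal.span {x})
    (n : ℕ) (i : ℕ) (hi1 : 1 ≤ i) (hi2 : i ≤ n - 1)
    (y : S ⧸ Ideal.span {x ^ n}) (hy : y = Ideal.Quotient.mk (Ideal.span {x ^ n}) x)
    (f : ((S ⧸ Ideal.span {x ^ n}) ⧸ Ideal.span {y ^ i}) →ₗ[S ⧸ Ideal.span {x ^ n}]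
      ((S ⧸ Ideal.span {x ^ n}) ⧸ Ideal.span {y ^ (i - 1)}) ×
        ((S ⧸ Ideal.span {x ^ n}) ⧸ Ideal.span {y ^ (i + 1)}))
    (hf : ∀ a : S ⧸ Ideal.span {x ^ n},
      f (Ideal.Quotient.mk (Ideal.span {y ^ i}) a) =
        (Ideal.Quotient.mk (Ideal.span {y ^ (i - 1)}) a,
          Ideal.Quotient.mk (Ideal.span {y ^ (i + 1)}) (a * y)))
    (g : (((S ⧸ Ideal.span {x ^ n}) ⧸ Ideal.span {y ^ (i - 1)}) ×
        ((S ⧸ Ideal.span {x ^ n}) ⧸ Ideal.span {y ^ (i + 1)}))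
      →ₗ[S ⧸ Ideal.span {x ^ n}] ((S ⧸ Ideal.span {x ^ n}) ⧸ Ideal.span {y ^ i}))
    (hg : ∀ a b : S ⧸ Ideal.span {x ^ n},
      g (Ideal.Quotient.mk (Ideal.span {y ^ (i - 1)}) a,
          Ideal.Quotient.mk (Ideal.span {y ^ (i + 1)}) b) =
        Ideal.Quotient.mk (Ideal.span {y ^ i}) (a * y - b)) :
    Function.Injective f ∧ LinearMap.range f = LinearMap.ker g ∧ Function.Surjective g ∧
      ¬ ∃ s : ((S ⧸ Ideal.span {x ^ n}) ⧸ Ideal.span {y ^ i}) →ₗ[S ⧸ Ideal.span {x ^ n}]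
          ((S ⧸ Ideal.span {x ^ n}) ⧸ Ideal.span {y ^ (i - 1)}) ×
            ((S ⧸ Ideal.span {x ^ n}) ⧸ Ideal.span {y ^ (i + 1)}),
          g.comp s = LinearMap.id := by
  have hirr : Irreducible x := (IsDiscreteValuationRing.irreducible_iff_uniformizer x).mpr hx
  have hreg : IsLeftRegular x := (IsRegular.of_ne_zero hirr.ne_zero).left
  have hdiv_left : ∀ a, y ^ (i + 1) ∣ y * a → y ^ i ∣ a := fun a h => by
    subst hy
    exact pow_dvd_of_pow_add_dvd_pow_mul (j := 1) hreg (by omega) (by rwa [add_comm, pow_one])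
  have hdiv_right : ∀ b, y ^ (i + 1) ∣ y ^ i * b → y ∣ b := fun b h => by
    subst hy
    simpa only [pow_one] using pow_dvd_of_pow_add_dvd_pow_mul (k := 1) hreg (by omega) h
  have hy_nonunit : ¬IsUnit y := hy ▸ not_isUnit_mk_span_pow hirr.not_isUnit (by omega)
  exact ⟨AuslanderReitenSequence.injective hdiv_left hf,
    AuslanderReitenSequence.range_eq_ker hi1 hf hg, AuslanderReitenSequence.surjective hg,
    AuslanderReitenSequence.not_exists_rightInverse hi1 hy_nonunit hdiv_right hg⟩

/-- Let `S` be a discrete valuation ring with uniformizer `x`, let `n ≥ 2`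
and set `R = S/(xⁿ)`, writing `y` for the image of `x` in `R`.  For `1 ≤ i ≤ n - 1`, the
`R`-linear maps
`f : R/(yⁱ) → R/(yⁱ⁻¹) ⊕ R/(yⁱ⁺¹)`, `a ↦ (a, a·y)`, and
`g : R/(yⁱ⁻¹) ⊕ R/(yⁱ⁺¹) → R/(yⁱ)`, `(a, b) ↦ a·y − b`
(here quantified over all linear maps satisfying these formulas on classes, which
determine them uniquely) form a short exact sequence
`0 → R/(yⁱ) → R/(yⁱ⁻¹) ⊕ R/(yⁱ⁺¹) → R/(yⁱ) → 0` which does not split. -/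
theorem auslander_reiten_sequence_of_artinian_hypersurface
    (S : Type) [CommRing S] [IsDomain S] [IsDiscreteValuationRing S]
    (x : S) (hx : IsLocalRing.maximalIdeal S = Ideal.span {x})
    (n : ℕ) (hn : 2 ≤ n) (i : ℕ) (hi1 : 1 ≤ i) (hi2 : i ≤ n - 1)
    (y : S ⧸ Ideal.span {x ^ n}) (hy : y = Ideal.Quotient.mk (Ideal.span {x ^ n}) x)
    (f : ((S ⧸ Ideal.span {x ^ n}) ⧸ Ideal.span {y ^ i}) →ₗ[S ⧸ Ideal.span {x ^ n}]
      ((S ⧸ Ideal.span {x ^ n}) ⧸ Ideal.span {y ^ (i - 1)}) ×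
        ((S ⧸ Ideal.span {x ^ n}) ⧸ Ideal.span {y ^ (i + 1)}))
    (hf : ∀ a : S ⧸ Ideal.span {x ^ n},
      f (Ideal.Quotient.mk (Ideal.span {y ^ i}) a) =
        (Ideal.Quotient.mk (Ideal.span {y ^ (i - 1)}) a,
          Ideal.Quotient.mk (Ideal.span {y ^ (i + 1)}) (a * y)))
    (g : (((S ⧸ Ideal.span {x ^ n}) ⧸ Ideal.span {y ^ (i - 1)}) ×
        ((S ⧸ Ideal.span {x ^ n}) ⧸ Ideal.span {y ^ (i + 1)}))
      →ₗ[S ⧸ Ideal.span {x ^ n}] ((S ⧸ Ideal.span {x ^ n}) ⧸ Ideal.span {y ^ i}))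
    (hg : ∀ a b : S ⧸ Ideal.span {x ^ n},
      g (Ideal.Quotient.mk (Ideal.span {y ^ (i - 1)}) a,
          Ideal.Quotient.mk (Ideal.span {y ^ (i + 1)}) b) =
        Ideal.Quotient.mk (Ideal.span {y ^ i}) (a * y - b)) :
    Function.Injective f ∧ LinearMap.range f = LinearMap.ker g ∧ Function.Surjective g ∧
      ¬ ∃ s : ((S ⧸ Ideal.span {x ^ n}) ⧸ Ideal.span {y ^ i}) →ₗ[S ⧸ Ideal.span {x ^ n}]
          ((S ⧸ Ideal.span {x ^ n}) ⧸ Ideal.span {y ^ (i - 1)}) ×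
            ((S ⧸ Ideal.span {x ^ n}) ⧸ Ideal.span {y ^ (i + 1)}),
          g.comp s = LinearMap.id :=
  auslander_reiten_sequence_of_artinian_hypersurface_general S x hx n i hi1 hi2 y hy f hf g hg
end

section
/- Let Q be a commutative ring and let q₁,…,q_c (c ≥ 1) be a regular sequence in Q. Then the sequence q₁,…,q_{c−1}, q₁x₁ + ⋯ + q_{c−1}x_{c−1} + q_c of length c is a regular sequence in the polynomial ring Q[x₁,…,x_{c−1}]. -/
/-!
`Q[x₁, …, x_{c-1}]` is faithfully flat over `Q`, so `C q₁, …, C q_c` is a regular sequence in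
it. The last element `∑ qᵢ xᵢ + q_c` differs from `C q_c` by an element of the ideal generated
by the preceding ones; such a change neither affects multiplication on the quotient by that
ideal nor the ideal generated by the whole sequence.
-/

open MvPolynomial RingTheory.Sequence

section

variable {R M : Type*} [CommRing R] [AddCommGroup M] [Module R M]

lemma Ideal.sup_span_singleton_eq_of_sub_mem {I : Ideal R} {a b : R} (h : a - b ∈ I) :
    I ⊔ Ideal.span {a} = I ⊔ Ideal.span {b} := by
  have key : ∀ {a b : R}, a - b ∈ I → I ⊔ Ideal.span {b} ≤ I ⊔ Ideal.span {a} := fun {a b} h ↦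
    sup_le le_sup_left <| Ideal.span_le.mpr <| Set.singleton_subset_iff.mpr <| by
      rw [show b = a - (a - b) by abel]
      exact sub_mem (Ideal.mem_sup_right (Ideal.mem_span_singleton_self a))
        (Ideal.mem_sup_left h)
  exact le_antisymm (key (by simpa using I.neg_mem h)) (key h)

namespace RingTheory.Sequence

lemma IsWeaklyRegular.append_singleton_of_sub_mem {rs : List R} {a b : R}
    (reg : IsWeaklyRegular M (rs ++ [a])) (h : a - b ∈ Ideal.ofList rs) :
    IsWeaklyRegular M (rs ++ [b]) := by
  rw [isWeaklyRegular_append_iff, isWeaklyRegular_singleton_iff] at reg ⊢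
  refine ⟨reg.1, ?_⟩
  have hab : (a • · : M ⧸ (Ideal.ofList rs • ⊤ : Submodule R M) → _) = (b • ·) := by
    funext x
    induction x using Submodule.Quotient.induction_on with
    | H m =>
      rw [← sub_eq_zero, ← sub_smul, ← Submodule.Quotient.mk_smul, Submodule.Quotient.mk_eq_zero]
      exact Submodule.smul_mem_smul h trivial
  exact (show Function.Injective (b • ·) from hab ▸ reg.2)

lemma IsRegular.append_singleton_of_sub_mem {rs : List R} {a b : R}
    (reg : IsRegular M (rs ++ [a])) (h : a - b ∈ Ideal.ofList rs) :
    IsRegular M (rs ++ [b]) where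
  toIsWeaklyRegular := reg.toIsWeaklyRegular.append_singleton_of_sub_mem h
  top_ne_smul := by
    simpa only [Ideal.ofList_append, Ideal.ofList_singleton,
      Ideal.sup_span_singleton_eq_of_sub_mem h] using reg.top_ne_smul

end RingTheory.Sequence

end

/-- Let `q₁, …, q_c` (`c = d + 1 ≥ 1`) be a regular sequence in a
commutative ring `Q`.  Then `q₁, …, q_{c-1}, q₁x₁ + ⋯ + q_{c-1}x_{c-1} + q_c` is a regular
sequence in the polynomial ring `Q[x₁, …, x_{c-1}]`. -/
theorem regular_sequence_generic_hypersurface_section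
    (Q : Type) [CommRing Q] (d : ℕ) (q : Fin (d + 1) → Q)
    (hreg : RingTheory.Sequence.IsRegular Q (List.ofFn q)) :
    RingTheory.Sequence.IsRegular (MvPolynomial (Fin d) Q)
      (List.ofFn (fun i : Fin d => (C (q i.castSucc) : MvPolynomial (Fin d) Q)) ++
        [(∑ i : Fin d, C (q i.castSucc) * X i) + C (q (Fin.last d))]) := by
  have := hreg.nontrivial
  have hC : IsRegular (MvPolynomial (Fin d) Q)
      (List.ofFn (fun i : Fin d => (C (q i.castSucc) : MvPolynomial (Fin d) Q)) ++
        [C (q (Fin.last d))]) := by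
    have hmap := hreg.of_faithfullyFlat (S := MvPolynomial (Fin d) Q)
    rwa [List.ofFn_succ', List.concat_eq_append, List.map_append, List.map_ofFn] at hmap
  refine hC.append_singleton_of_sub_mem ?_
  rw [sub_add_cancel_right, neg_mem_iff]
  exact Ideal.sum_mem _ fun i _ ↦ Ideal.mul_mem_right _ _ <|
    Ideal.subset_span (List.mem_ofFn.mpr ⟨i, rfl⟩)
end

section
/- Let R be a commutative noetherian ring of finite injective dimension as a module over itself, let I ⊆ R be an ideal generated by an R-regular sequence, and set S = R/I. If A is an acyclic cochain complex of injective R-modules, then the cochain complex whose n-th term is Hom_R(S, A^n), with the induced differentials, is again acyclic, and each Hom_R(S, A^n) is an injective S-module. -/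
open CategoryTheory Limits Opposite

/-- `Ext^i(M, N)` for `R`-modules, computed via the derived functor `Ext` of Mathlib. -/
noncomputable def extGroup (R : Type) [CommRing R] (M N : ModuleCat R) (i : ℕ) : ModuleCat R :=
  ((Ext R (ModuleCat R) i).obj (op M)).obj N

/-- A commutative ring has finite injective dimension as a module over itself iff
`Ext^i(-, R)` vanishes uniformly in all large degrees `i`. -/
def HasFiniteSelfInjectiveDimension (R : Type) [CommRing R] : Prop :=
  ∃ n : ℕ, ∀ (N : ModuleCat R) (i : ℕ), n < i → IsZero (extGroup R N (ModuleCat.of R R) i)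

/-- The `R ⧸ I`-module structure on `Hom_R(R ⧸ I, M)`: since the domain is annihilated by
`I`, so is the `R`-module `Hom_R(R ⧸ I, M)`, and the `R`-action descends to `R ⧸ I`. -/
noncomputable def homQuotientModule {R : Type} [CommRing R] (I : Ideal R)
    (M : Type) [AddCommGroup M] [Module R M] :
    Module (R ⧸ I) ((R ⧸ I) →ₗ[R] M) :=
  Module.IsTorsionBySet.module (I := I) <| by
    intro f a
    refine LinearMap.ext fun t => ?_
    obtain ⟨s, rfl⟩ := Ideal.Quotient.mk_surjective t
    rw [LinearMap.smul_apply, ← map_smul]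
    have h0 : (a : R) • (Ideal.Quotient.mk I s : R ⧸ I) = 0 := by
      have : (a : R) • (Ideal.Quotient.mk I s : R ⧸ I) =
          Ideal.Quotient.mk I ((a : R) * s) := rfl
      rw [this, Ideal.Quotient.eq_zero_iff_mem]
      exact I.mul_mem_right s a.2
    rw [h0, map_zero, LinearMap.zero_apply]

/-!
Identify `Hom_R(R ⧸ I, M)` with the `I`-torsion `M[I]` via `φ ↦ φ 1`, and induct along the
regular sequence. Let `J` be generated by an initial segment and `r` be the next element, so that
`r` is a nonzerodivisor on `R ⧸ J`. If the complex `A[J]` is exact in two consecutive degrees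
`A' → A → B → C`, it stays exact at `B` after passing to `A[J + (r)]`: a cocycle `b ∈ B[J + (r)]`
lifts to some `a ∈ A[J]`; the cocycle `r • a` is a boundary `e c` with `c ∈ A'[J]`; extending
`t ↦ t • c` along multiplication by `r` on `R ⧸ J` into the injective module `A'` writes
`c = r • c'` with `c' ∈ A'[J]`, and then `a - e c'` lies in `A[J + (r)]` and still lifts `b`.

Injectivity of `Hom_R(R ⧸ I, E)` over `R ⧸ I` is Baer's criterion: a map from an ideal of
`R ⧸ I` is evaluated at `1`, extended over `R` using injectivity of `E`, and curried back.
-/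

open Submodule

namespace Submodule

variable {R M N : Type*} [CommRing R] [AddCommGroup M] [Module R M] [AddCommGroup N] [Module R N]

theorem mem_torsionBySet_iff_le_torsionOf (J : Ideal R) (x : M) :
    x ∈ torsionBySet R M J ↔ J ≤ Ideal.torsionOf R M x := by
  simp [SetLike.le_def]

theorem mem_torsionBySet_sup_span_singleton_iff (J : Ideal R) (r : R) (x : M) :
    x ∈ torsionBySet R M ↑(J ⊔ Ideal.span {r}) ↔ x ∈ torsionBySet R M J ∧ r • x = 0 := by
  simp only [mem_torsionBySet_iff_le_torsionOf, sup_le_iff, Ideal.span_singleton_le_iff_mem,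
    Ideal.mem_torsionOf_iff]

theorem map_torsionBySet_le (f : M →ₗ[R] N) (s : Set R) :
    (torsionBySet R M s).map f ≤ torsionBySet R N s := by
  rintro _ ⟨x, hx, rfl⟩
  simp_all [← map_smul]

theorem apply_one_mem_torsionBySet (I : Ideal R) (φ : R ⧸ I →ₗ[R] M) :
    φ 1 ∈ torsionBySet R M I := by
  rw [mem_torsionBySet_iff]
  rintro ⟨a, ha⟩
  rw [← map_smul, Algebra.smul_def, mul_one, Ideal.Quotient.algebraMap_eq,
    Ideal.Quotient.eq_zero_iff_mem.mpr ha, map_zero]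

theorem exists_apply_one_eq_of_mem_torsionBySet {I : Ideal R} {x : M}
    (hx : x ∈ torsionBySet R M I) : ∃ φ : R ⧸ I →ₗ[R] M, φ 1 = x :=
  ⟨I.liftQ (LinearMap.toSpanSingleton R M x) fun a ha => by
    simpa using (mem_torsionBySet_iff _ _).mp hx ⟨a, ha⟩, one_smul R x⟩

end Submodule

open LinearMap in
theorem range_llcomp_eq_ker_llcomp_of_le_map {R M N P : Type*} [CommRing R] {I : Ideal R}
    [AddCommGroup M] [Module R M] [AddCommGroup N] [Module R N] [AddCommGroup P] [Module R P]
    (f : M →ₗ[R] N) (g : N →ₗ[R] P) (hgf : g ∘ₗ f = 0)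
    (h : ker g ⊓ torsionBySet R N I ≤ (torsionBySet R M I).map f) :
    LinearMap.range (llcomp R (R ⧸ I) M N (σ₁₂ := RingHom.id R) (σ₁₃ := RingHom.id R) f) =
      LinearMap.ker (llcomp R (R ⧸ I) N P (σ₁₂ := RingHom.id R) (σ₁₃ := RingHom.id R) g) := by
  refine le_antisymm ?_ fun φ hφ => ?_
  · rintro _ ⟨ψ, rfl⟩
    rw [mem_ker, llcomp_apply', llcomp_apply', ← comp_assoc, hgf, LinearMap.zero_comp]
  · rw [mem_ker, llcomp_apply'] at hφ
    obtain ⟨a, haI, ha⟩ := h ⟨LinearMap.congr_fun hφ 1, apply_one_mem_torsionBySet I φ⟩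
    obtain ⟨ψ, rfl⟩ := exists_apply_one_eq_of_mem_torsionBySet haI
    exact ⟨ψ, linearMap_qext _ (ext_ring ha)⟩

section TorsionExact

variable {R : Type} [CommRing R]

theorem Module.Injective.exists_smul_eq_of_mem_torsionBySet {E : Type} [AddCommGroup E]
    [Module R E] [Module.Injective R E] {J : Ideal R} {r : R}
    (hr : IsSMulRegular (R ⧸ J) r) {c : E} (hc : c ∈ torsionBySet R E J) :
    ∃ e ∈ torsionBySet R E J, r • e = c := by
  obtain ⟨φ, hφ⟩ := exists_apply_one_eq_of_mem_torsionBySet hc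
  obtain ⟨ψ, hψ⟩ := Module.Injective.extension_property R E _ _
    (DistribSMul.toLinearMap R (R ⧸ J) r) hr φ
  refine ⟨ψ 1, apply_one_mem_torsionBySet J ψ, ?_⟩
  rw [← map_smul, ← hφ, ← hψ]
  rfl

open LinearMap in
theorem ker_inf_torsionBySet_sup_span_singleton_le_map {J : Ideal R} {r : R}
    (hr : IsSMulRegular (R ⧸ J) r) {A' A B C : Type} [AddCommGroup A'] [Module R A']
    [Module.Injective R A'] [AddCommGroup A] [Module R A] [AddCommGroup B] [Module R B]
    [AddCommGroup C] [Module R C] (e : A' →ₗ[R] A) (f : A →ₗ[R] B) (g : B →ₗ[R] C)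
    (hfe : f ∘ₗ e = 0)
    (hA : ker f ⊓ torsionBySet R A J ≤ (torsionBySet R A' J).map e)
    (hB : ker g ⊓ torsionBySet R B J ≤ (torsionBySet R A J).map f) :
    ker g ⊓ torsionBySet R B ↑(J ⊔ Ideal.span {r}) ≤
      (torsionBySet R A ↑(J ⊔ Ideal.span {r})).map f := by
  intro b hb
  rw [mem_inf, mem_torsionBySet_sup_span_singleton_iff] at hb
  obtain ⟨hgb, hbJ, hrb⟩ := hb
  obtain ⟨a, haJ, rfl⟩ := hB ⟨hgb, hbJ⟩
  have hra : r • a ∈ ker f ⊓ torsionBySet R A J :=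
    ⟨by rw [SetLike.mem_coe, mem_ker, map_smul, hrb], smul_mem _ r haJ⟩
  obtain ⟨c, hcJ, hc⟩ := hA hra
  obtain ⟨c', hc'J, rfl⟩ := Module.Injective.exists_smul_eq_of_mem_torsionBySet hr hcJ
  refine ⟨a - e c', ?_, ?_⟩
  · rw [SetLike.mem_coe, mem_torsionBySet_sup_span_singleton_iff, smul_sub, ← map_smul, hc,
      sub_self]
    exact ⟨sub_mem haJ (map_torsionBySet_le e _ ⟨c', hc'J, rfl⟩), rfl⟩
  · rw [map_sub, ← LinearMap.comp_apply, hfe, LinearMap.zero_apply, sub_zero]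

open LinearMap RingTheory.Sequence in
theorem ker_inf_torsionBySet_ofList_le_map {rs : List R} (hrs : IsWeaklyRegular R rs)
    (A : ℤ → Type) [∀ n, AddCommGroup (A n)] [∀ n, Module R (A n)]
    [∀ n, Module.Injective R (A n)] (d : ∀ n : ℤ, A n →ₗ[R] A (n + 1))
    (hexact : ∀ n : ℤ, range (d n) = ker (d (n + 1))) (n : ℤ) :
    ker (d (n + 1)) ⊓ torsionBySet R (A (n + 1)) (Ideal.ofList rs) ≤
      (torsionBySet R (A n) (Ideal.ofList rs)).map (d n) := by
  induction rs using List.reverseRecOn generalizing n with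
  | nil =>
    rintro b ⟨hb, -⟩
    obtain ⟨a, rfl⟩ := (hexact n).ge hb
    exact ⟨a, by simp, rfl⟩
  | append_singleton rs r ih =>
    rw [isWeaklyRegular_append_iff, isWeaklyRegular_singleton_iff, smul_eq_mul,
      Ideal.mul_top] at hrs
    rw [Ideal.ofList_append, Ideal.ofList_singleton]
    obtain ⟨n, rfl⟩ : ∃ m, n = m + 1 := ⟨n - 1, by ring⟩
    exact ker_inf_torsionBySet_sup_span_singleton_le_map hrs.2 (d n) (d (n + 1)) (d (n + 1 + 1))
      (range_le_ker_iff.mp (hexact n).le) (ih hrs.1 n) (ih hrs.1 (n + 1))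

end TorsionExact

section HomQuotient

attribute [local instance] homQuotientModule

variable {R : Type} [CommRing R] (I : Ideal R) {M : Type} [AddCommGroup M] [Module R M]

theorem homQuotientModule_smul_apply (s t : R ⧸ I) (φ : R ⧸ I →ₗ[R] M) :
    (s • φ) t = φ (s * t) := by
  obtain ⟨r, rfl⟩ := Ideal.Quotient.mk_surjective s
  show (r • φ) t = _
  rw [LinearMap.smul_apply, ← map_smul, Algebra.smul_def]
  rfl

theorem Module.Injective.homQuotient [Module.Injective R M] :
    Module.Injective (R ⧸ I) (R ⧸ I →ₗ[R] M) := by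
  refine Module.Baer.injective fun J g => ?_
  let ψ : J.restrictScalars R →ₗ[R] M :=
    { toFun j := g ⟨j, j.2⟩ 1
      map_add' j j' := by simp only [← LinearMap.add_apply, ← map_add]; rfl
      map_smul' r j := by
        have hrj : (⟨r • (j : R ⧸ I), (r • j).2⟩ : J) = Ideal.Quotient.mk I r • ⟨j, j.2⟩ :=
          Subtype.ext (Algebra.smul_def r (j : R ⧸ I))
        change g ⟨r • (j : R ⧸ I), (r • j).2⟩ 1 = r • g ⟨j, j.2⟩ 1
        rw [hrj, map_smul, homQuotientModule_smul_apply, mul_one, ← map_smul, Algebra.smul_def,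
          mul_one, Ideal.Quotient.algebraMap_eq] }
  obtain ⟨Ψ, hΨ⟩ := Module.Injective.extension_property R M _ _
    (J.restrictScalars R).subtype Subtype.val_injective ψ
  refine ⟨LinearMap.toSpanSingleton (R ⧸ I) _ Ψ, fun s hs => LinearMap.ext fun t => ?_⟩
  have hts : (⟨t * s, J.mul_mem_left t hs⟩ : J) = t • ⟨s, hs⟩ := rfl
  calc (s • Ψ) t = ψ ⟨t * s, J.mul_mem_left t hs⟩ := by
        rw [homQuotientModule_smul_apply, mul_comm, ← hΨ]; rfl
    _ = g ⟨s, hs⟩ t := by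
        simp only [ψ, LinearMap.coe_mk, AddHom.coe_mk, hts, map_smul,
          homQuotientModule_smul_apply, mul_one]

end HomQuotient

theorem hom_quotient_of_acyclic_injective_complex_general
    (R : Type) [CommRing R]
    (c : ℕ) (x : Fin c → R) (I : Ideal R)
    (hI : I = Ideal.span (Set.range x))
    (hregseq : RingTheory.Sequence.IsRegular R (List.ofFn x))
    (A : ℤ → Type) [∀ n, AddCommGroup (A n)] [∀ n, Module R (A n)]
    (hinj : ∀ n, Module.Injective R (A n))
    (d : ∀ n : ℤ, A n →ₗ[R] A (n + 1))
    (hexact : ∀ n : ℤ, LinearMap.range (d n) = LinearMap.ker (d (n + 1))) :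
    (∀ n : ℤ,
      LinearMap.range (LinearMap.llcomp R (R ⧸ I) (A n) (A (n + 1)) (σ₁₂ := RingHom.id R) (σ₁₃ := RingHom.id R) (d n)) =
        LinearMap.ker (LinearMap.llcomp R (R ⧸ I) (A (n + 1)) (A (n + 1 + 1)) (σ₁₂ := RingHom.id R) (σ₁₃ := RingHom.id R) (d (n + 1)))) ∧
    (∀ n : ℤ,
      @Module.Injective (R ⧸ I) _ ((R ⧸ I) →ₗ[R] A n) _ (homQuotientModule I (A n))) := by
  obtain rfl : I = Ideal.ofList (List.ofFn x) :=
    hI.trans <| congrArg Ideal.span (Set.ext fun r => (List.mem_ofFn' x r).symm)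
  refine ⟨fun n => ?_, fun n => Module.Injective.homQuotient _⟩
  exact range_llcomp_eq_ker_llcomp_of_le_map (d n) (d (n + 1))
    (LinearMap.range_le_ker_iff.mp (hexact n).le)
    (ker_inf_torsionBySet_ofList_le_map hregseq.toIsWeaklyRegular A d hexact n)

/-- Let `R` be a commutative noetherian ring of finite injective dimension
over itself, let `I` be an ideal generated by an `R`-regular sequence and `S = R ⧸ I`.
If `A` is an acyclic cochain complex of injective `R`-modules (terms `A n`, `n : ℤ`,
differentials `d n : A n → A (n+1)`), then the induced cochain complex with `n`-th term
`Hom_R(S, A n)` (differentials given by postcomposition with `d n`) is again acyclic, and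
each `Hom_R(S, A n)` is an injective `S`-module. -/
theorem hom_quotient_of_acyclic_injective_complex
    (R : Type) [CommRing R] [IsNoetherianRing R]
    (hGor : HasFiniteSelfInjectiveDimension R)
    (c : ℕ) (x : Fin c → R) (I : Ideal R)
    (hI : I = Ideal.span (Set.range x))
    (hregseq : RingTheory.Sequence.IsRegular R (List.ofFn x))
    (A : ℤ → Type) [∀ n, AddCommGroup (A n)] [∀ n, Module R (A n)]
    (hinj : ∀ n, Module.Injective R (A n))
    (d : ∀ n : ℤ, A n →ₗ[R] A (n + 1))
    (hexact : ∀ n : ℤ, LinearMap.range (d n) = LinearMap.ker (d (n + 1))) :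
    (∀ n : ℤ,
      LinearMap.range (LinearMap.llcomp R (R ⧸ I) (A n) (A (n + 1)) (σ₁₂ := RingHom.id R) (σ₁₃ := RingHom.id R) (d n)) =
        LinearMap.ker (LinearMap.llcomp R (R ⧸ I) (A (n + 1)) (A (n + 1 + 1)) (σ₁₂ := RingHom.id R) (σ₁₃ := RingHom.id R) (d (n + 1)))) ∧
    (∀ n : ℤ,
      @Module.Injective (R ⧸ I) _ ((R ⧸ I) →ₗ[R] A n) _ (homQuotientModule I (A n))) :=
  hom_quotient_of_acyclic_injective_complex_general R c x I hI hregseq A hinj d hexact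
end
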